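/- Let P = conv{v^1,...,v^ℓ} + cone{r^1,...,r^m} ⊆ ℝ^{p+q} with all r^j integral, and for K ⊆ {1,...,m} with {r^j : j ∈ K} linearly independent define B^K = {x ∈ ℤ^p × ℝ^q : x = v + Σ_{j∈K} μ_j r^j, v ∈ conv{v^i}, μ_j ∈ [0,1]} and intcone(R_K) = {Σ_{j∈K} λ_j r^j : λ_j ∈ ℤ_{≥0}}. Then P ∩ (ℤ^p × ℝ^q) = ∪_K (B^K + intcone(R_K)), where the union is over all K such that {r^j : j ∈ K} is linearly independent. -/

import Mathlib

/-!
By the conic Carathéodory theorem, the conic part of a point of `P` can be written with a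
linearly independent set `{r^j : j ∈ K}` of rays and coefficients `ν_j ≥ 0`. Splitting each
`ν_j` into its fractional part in `[0, 1)` and its floor in `ℕ` writes the point as an element
of `B^K` plus an element of `intcone(R_K)`; since the `r^j` are integral, subtracting the second
summand keeps the first `p` coordinates integral. Conversely such a sum lies in `P` and is a
mixed-integer point because the mixed-integer points form an additive group.
-/

open Finset Pointwise

section ConicCaratheodory

variable {R M ι : Type*} [Field R] [LinearOrder R] [IsStrictOrderedRing R]
  [AddCommGroup M] [Module R M] {r : ι → M} {s : Finset ι}

lemma exists_sum_smul_eq_zero_pos_of_not_linearIndepOn (h : ¬LinearIndepOn R r s) :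
    ∃ g : ι → R, ∑ i ∈ s, g i • r i = 0 ∧ ∃ i ∈ s, 0 < g i := by
  obtain ⟨f, hf, i, hi, hfi⟩ := not_linearIndepOn_finset_iff.mp h
  rcases hfi.lt_or_gt with hneg | hpos
  · exact ⟨-f, by simp [hf], i, hi, neg_pos.mpr hneg⟩
  · exact ⟨f, hf, i, hi, hpos⟩

/-- Move `ν` along a linear dependence `g` until its first coefficient reaches zero. -/
lemma exists_nonneg_sum_erase_eq_of_not_linearIndepOn [DecidableEq ι] {ν : ι → R}
    (h : ¬LinearIndepOn R r s) (hν : ∀ j ∈ s, 0 ≤ ν j) :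
    ∃ i ∈ s, ∃ ν' : ι → R, (∀ j ∈ s.erase i, 0 ≤ ν' j) ∧
      ∑ j ∈ s.erase i, ν' j • r j = ∑ j ∈ s, ν j • r j := by
  obtain ⟨g, hg, hgpos⟩ := exists_sum_smul_eq_zero_pos_of_not_linearIndepOn h
  obtain ⟨i, hi, hmin⟩ : ∃ i ∈ {z ∈ s | 0 < g z}, ∀ j ∈ {z ∈ s | 0 < g z},
      ν i / g i ≤ ν j / g j :=
    exists_min_image _ _ (by simpa [Finset.Nonempty] using hgpos)
  rw [mem_filter] at hi
  set c := ν i / g i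
  have hc : 0 ≤ c := div_nonneg (hν i hi.1) hi.2.le
  refine ⟨i, hi.1, fun j => ν j - c * g j, fun j hj => ?_, ?_⟩
  · have hjs := mem_of_mem_erase hj
    rcases le_or_gt (g j) 0 with hgj | hgj
    · nlinarith [hν j hjs]
    · have := hmin j (mem_filter.mpr ⟨hjs, hgj⟩)
      rw [le_div_iff₀ hgj] at this
      linarith
  · have hi0 : ν i - c * g i = 0 := by simp [c, hi.2.ne']
    rw [sum_erase _ (by simp only [hi0, zero_smul])]
    simp only [sub_smul, sum_sub_distrib, mul_smul, ← smul_sum, hg, smul_zero, sub_zero]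

theorem exists_linearIndepOn_nonneg_sum_eq (r : ι → M) (s : Finset ι) (ν : ι → R)
    (hν : ∀ j ∈ s, 0 ≤ ν j) :
    ∃ K ⊆ s, LinearIndepOn R r K ∧ ∃ ν' : ι → R, (∀ j ∈ K, 0 ≤ ν' j) ∧
      ∑ j ∈ K, ν' j • r j = ∑ j ∈ s, ν j • r j := by
  classical
  induction s using Finset.strongInduction generalizing ν with
  | H s ih =>
    by_cases hli : LinearIndepOn R r s
    · exact ⟨s, subset_rfl, hli, ν, hν, rfl⟩
    obtain ⟨i, hi, ν', hν', hsum⟩ := exists_nonneg_sum_erase_eq_of_not_linearIndepOn hli hν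
    obtain ⟨K, hK, hKli, ν'', hν'', hsum'⟩ := ih _ (erase_ssubset hi) ν' hν'
    exact ⟨K, hK.trans (erase_subset i s), hKli, ν'', hν'', hsum'.trans hsum⟩

end ConicCaratheodory

section MixedInteger

variable {ι : Type*}

def mixedIntegerLattice (I : Set ι) : AddSubgroup (ι → ℝ) where
  carrier := {x | ∀ i ∈ I, ∃ z : ℤ, x i = z}
  add_mem' hx hy i hi := by
    obtain ⟨a, ha⟩ := hx i hi
    obtain ⟨b, hb⟩ := hy i hi
    exact ⟨a + b, by simp [ha, hb]⟩
  zero_mem' _ _ := ⟨0, by simp⟩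
  neg_mem' hx i hi := by
    obtain ⟨a, ha⟩ := hx i hi
    exact ⟨-a, by simp [ha]⟩

lemma natCast_sum_smul_mem_mixedIntegerLattice {κ : Type*} (I : Set ι) {r : κ → ι → ℝ}
    (hr : ∀ j i, ∃ z : ℤ, r j i = z) (K : Finset κ) (lam : κ → ℕ) :
    ∑ j ∈ K, (lam j : ℝ) • r j ∈ mixedIntegerLattice I :=
  sum_mem fun j _ => by
    rw [Nat.cast_smul_eq_nsmul]
    exact nsmul_mem (show r j ∈ mixedIntegerLattice I from fun i _ => hr j i) _

end MixedInteger

lemma sum_smul_eq_sum_sub_natFloor_add_sum_natFloor {ι M : Type*} [AddCommGroup M] [Module ℝ M]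
    (K : Finset ι) (ν : ι → ℝ) (r : ι → M) :
    ∑ j ∈ K, ν j • r j =
      ∑ j ∈ K, (ν j - ⌊ν j⌋₊) • r j + ∑ j ∈ K, (⌊ν j⌋₊ : ℝ) • r j := by
  simp only [← sum_add_distrib, ← add_smul, sub_add_cancel]

lemma sum_univ_indicator_smul {ι M : Type*} [Fintype ι] [AddCommMonoid M] [Module ℝ M]
    (K : Finset ι) (c : ι → ℝ) (r : ι → M) :
    ∑ j, (K : Set ι).indicator c j • r j = ∑ j ∈ K, c j • r j := by
  simp only [← Set.indicator_smul_apply_left]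
  exact sum_indicator_subset _ K.subset_univ

/-- Decomposition of the mixed-integer points of a polyhedron. -/
theorem stmt11 (p q ℓ m : ℕ) (v : Fin ℓ → (Fin (p + q) → ℝ))
    (r : Fin m → (Fin (p + q) → ℝ))
    (hrint : ∀ j i, ∃ z : ℤ, r j i = (z : ℝ))
    (P : Set (Fin (p + q) → ℝ))
    (hP : P = {x | ∃ w ∈ convexHull ℝ (Set.range v), ∃ ν : Fin m → ℝ,
      (∀ j, 0 ≤ ν j) ∧ x = w + ∑ j, ν j • r j}) :
    {x ∈ P | ∀ i : Fin (p + q), (i : ℕ) < p → ∃ z : ℤ, x i = (z : ℝ)} =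
      ⋃ K ∈ {K : Finset (Fin m) | LinearIndependent ℝ (fun j : K => r (j : Fin m))},
        ({x : Fin (p + q) → ℝ |
            (∀ i : Fin (p + q), (i : ℕ) < p → ∃ z : ℤ, x i = (z : ℝ)) ∧
            ∃ w ∈ convexHull ℝ (Set.range v), ∃ μ : Fin m → ℝ,
              (∀ j ∈ K, μ j ∈ Set.Icc (0 : ℝ) 1) ∧ x = w + ∑ j ∈ K, μ j • r j}
          + {y : Fin (p + q) → ℝ | ∃ lam : Fin m → ℕ, y = ∑ j ∈ K, (lam j : ℝ) • r j}) := by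
  set L := mixedIntegerLattice {i : Fin (p + q) | (i : ℕ) < p}
  have hcone (K : Finset (Fin m)) (lam : Fin m → ℕ) : ∑ j ∈ K, (lam j : ℝ) • r j ∈ L :=
    natCast_sum_smul_mem_mixedIntegerLattice _ hrint K lam
  subst hP
  ext x
  simp only [Set.mem_ofPred_eq, Set.mem_iUnion, exists_prop]
  constructor
  · rintro ⟨⟨w, hw, ν, hν, rfl⟩, hx⟩
    obtain ⟨K, -, hK, ν', hν', hsum⟩ :=
      exists_linearIndepOn_nonneg_sum_eq r univ ν fun j _ => hν j
    have hsplit : w + ∑ j, ν j • r j = (w + ∑ j ∈ K, (ν' j - ⌊ν' j⌋₊) • r j) +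
        ∑ j ∈ K, (⌊ν' j⌋₊ : ℝ) • r j := by
      rw [add_assoc, ← sum_smul_eq_sum_sub_natFloor_add_sum_natFloor, hsum]
    refine ⟨K, hK, _, ⟨?_, w, hw, _, fun j hj => ⟨?_, ?_⟩, rfl⟩, _, ⟨_, rfl⟩, hsplit.symm⟩
    · have := sub_mem (show _ ∈ L from hx) (hcone K fun j => ⌊ν' j⌋₊)
      rwa [hsplit, add_sub_cancel_right] at this
    · exact sub_nonneg.mpr (Nat.floor_le (hν' j hj))
    · linarith [Nat.lt_floor_add_one (ν' j)]
  · rintro ⟨K, -, b, ⟨hb, w, hw, μ, hμ, rfl⟩, y, ⟨lam, rfl⟩, rfl⟩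
    refine ⟨⟨w, hw, (K : Set (Fin m)).indicator (fun j => μ j + lam j), fun j => ?_, ?_⟩,
      add_mem (show _ ∈ L from hb) (hcone K lam)⟩
    · exact Set.indicator_nonneg (fun j hj => add_nonneg (hμ j hj).1 (Nat.cast_nonneg _)) j
    · simp only [sum_univ_indicator_smul, add_smul, sum_add_distrib, add_assoc]
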